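/- arXiv:1906.02186 — 3 statements merged into one kernel-verified Lean document; each statement's English description precedes it below -/
import Mathlib

section
/- Let d ≥ 3 and let B̄_R(y₀) ⊆ ℝ^d be a closed ball (of radius R, center y₀) containing two points x₀ and −x₀ with |x₀| = 1/2. Then there exists a vector e ∈ ℝ^d with e ⊥ x₀ and |e| = 1/2 such that the set 𝒞(x₀, e) := closure of the convex hull of the union, over all vectors f orthogonal to span{x₀, e}, of the sets C(x₀, e, f) := convex hull of {e} ∪ {u ∈ span{x₀, f} : |u| ≤ 1/2}, is contained in B̄_R(y₀). -/
open scoped RealInnerProductSpace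

/-!
Write `y₀ = c • x₀ + q` with `q ⊥ x₀` and take `e` of length `1/2` in the plane of `x₀` and `q`
with `⟪e, q⟫ ≥ 0`. Expanding `‖w - y₀‖²`, a point `w` with `‖w‖ ≤ ‖x₀‖` lies in the ball as soon
as `⟪w, y₀⟫ ≥ -|⟪x₀, y₀⟫|`, because the ball contains `±x₀`. For `w = e` this holds because
`⟪e, y₀⟫ = ⟪e, q⟫ ≥ 0`; for `w ∈ span {x₀, f}` with `f ⊥ span {x₀, e} ∋ q` we get
`⟪w, y₀⟫ = c ⟪w, x₀⟫`, of absolute value at most `|c| ‖x₀‖² = |⟪x₀, y₀⟫|`. The ball is closed and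
convex, so it then contains the closed convex hull.
-/

section

variable {E : Type*} [NormedAddCommGroup E] [InnerProductSpace ℝ E]

lemma mem_closedBall_of_neg_abs_inner_le {x y w : E} {R : ℝ}
    (hx : x ∈ Metric.closedBall y R) (hx' : -x ∈ Metric.closedBall y R)
    (hw : ‖w‖ ≤ ‖x‖) (hwy : -|⟪x, y⟫| ≤ ⟪w, y⟫) :
    w ∈ Metric.closedBall y R := by
  rw [Metric.mem_closedBall, dist_eq_norm] at hx hx' ⊢
  have hR : 0 ≤ R := (norm_nonneg _).trans hx
  have hxy : ‖x - y‖ ^ 2 ≤ R ^ 2 := pow_le_pow_left₀ (norm_nonneg _) hx 2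
  have hxy' : ‖-x - y‖ ^ 2 ≤ R ^ 2 := pow_le_pow_left₀ (norm_nonneg _) hx' 2
  have hw2 : ‖w‖ ^ 2 ≤ ‖x‖ ^ 2 := pow_le_pow_left₀ (norm_nonneg _) hw 2
  rw [norm_sub_sq_real] at hxy hxy'
  rw [norm_neg, inner_neg_left] at hxy'
  refine (pow_le_pow_iff_left₀ (norm_nonneg _) hR two_ne_zero).1 ?_
  rw [norm_sub_sq_real]
  cases abs_cases ⟪x, y⟫ <;> linarith

lemma exists_ne_zero_inner_eq_zero (hE : 2 ≤ Module.finrank ℝ E) (x : E) :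
    ∃ v : E, v ≠ 0 ∧ ⟪v, x⟫ = 0 := by
  have hspan : ℝ ∙ x ≠ ⊤ :=
    (span_lt_top_of_card_lt_finrank (by simp; omega)).ne
  obtain ⟨v, hv, hv0⟩ := Submodule.exists_mem_ne_zero_of_ne_bot
    (mt (ℝ ∙ x).orthogonal_eq_bot_iff.1 hspan)
  exact ⟨v, hv0, Submodule.mem_orthogonal_singleton_iff_inner_left.1 hv⟩

lemma exists_inner_eq_zero_norm_eq_mem_span_pair (hE : 2 ≤ Module.finrank ℝ E) {x q : E}
    (hq : ⟪x, q⟫ = 0) {r : ℝ} (hr : 0 < r) :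
    ∃ e : E, ⟪e, x⟫ = 0 ∧ ‖e‖ = r ∧ 0 ≤ ⟪e, q⟫ ∧ q ∈ Submodule.span ℝ {x, e} := by
  obtain ⟨v, hv0, hvx, hvq, hqv⟩ :
      ∃ v : E, v ≠ 0 ∧ ⟪v, x⟫ = 0 ∧ 0 ≤ ⟪v, q⟫ ∧ q ∈ Submodule.span ℝ {x, v} := by
    by_cases hq0 : q = 0
    · obtain ⟨v, hv0, hvx⟩ := exists_ne_zero_inner_eq_zero hE x
      exact ⟨v, hv0, hvx, by simp [hq0], hq0 ▸ Submodule.zero_mem _⟩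
    · exact ⟨q, hq0, by rwa [real_inner_comm], real_inner_self_nonneg,
        Submodule.subset_span (by simp)⟩
  have hc : 0 < r / ‖v‖ := div_pos hr (norm_pos_iff.2 hv0)
  refine ⟨(r / ‖v‖) • v, by rw [real_inner_smul_left, hvx, mul_zero], ?_,
    by rw [real_inner_smul_left]; positivity, ?_⟩
  · rw [norm_smul, Real.norm_of_nonneg hc.le, div_mul_cancel₀ _ (norm_ne_zero_iff.2 hv0)]
  · rwa [Submodule.span_insert, Submodule.span_singleton_smul_eq hc.ne'.isUnit,
      ← Submodule.span_insert]

lemma abs_inner_le_abs_inner_of_mem_span_pair {x f q w : E} (c : ℝ) (hq : ⟪x, q⟫ = 0)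
    (hfq : ⟪f, q⟫ = 0) (hw : w ∈ Submodule.span ℝ {x, f}) (hwx : ‖w‖ ≤ ‖x‖) :
    |⟪w, c • x + q⟫| ≤ |⟪x, c • x + q⟫| := by
  have hwq : ⟪w, q⟫ = 0 := by
    obtain ⟨a, b, rfl⟩ := Submodule.mem_span_pair.1 hw
    simp [inner_add_left, real_inner_smul_left, hq, hfq]
  calc |⟪w, c • x + q⟫| = |c| * |⟪w, x⟫| := by
        rw [inner_add_right, hwq, add_zero, real_inner_smul_right, abs_mul]
    _ ≤ |c| * (‖x‖ * ‖x‖) := by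
        gcongr
        exact (abs_real_inner_le_norm w x).trans (by gcongr)
    _ = |⟪x, c • x + q⟫| := by
        rw [inner_add_right, hq, add_zero, real_inner_smul_right, real_inner_self_eq_norm_mul_norm,
          abs_mul, abs_mul_self]

end

theorem stmt5 {d : ℕ} (hd : 3 ≤ d) (R : ℝ) (y₀ x₀ : EuclideanSpace ℝ (Fin d))
    (hx₀ : ‖x₀‖ = 1 / 2)
    (hmem : x₀ ∈ Metric.closedBall y₀ R) (hmem' : -x₀ ∈ Metric.closedBall y₀ R) :
    ∃ e : EuclideanSpace ℝ (Fin d), ⟪e, x₀⟫ = 0 ∧ ‖e‖ = 1 / 2 ∧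
      closure (convexHull ℝ
        (⋃ f ∈ {f : EuclideanSpace ℝ (Fin d) |
            ∀ v ∈ Submodule.span ℝ ({x₀, e} : Set (EuclideanSpace ℝ (Fin d))), ⟪f, v⟫ = 0},
          convexHull ℝ ({e} ∪
            {u | u ∈ Submodule.span ℝ ({x₀, f} : Set (EuclideanSpace ℝ (Fin d))) ∧ ‖u‖ ≤ 1 / 2})))
        ⊆ Metric.closedBall y₀ R := by
  obtain ⟨p, hp, q, hq, rfl⟩ := (ℝ ∙ x₀).exists_add_mem_mem_orthogonal y₀
  obtain ⟨c, rfl⟩ := Submodule.mem_span_singleton.1 hp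
  rw [Submodule.mem_orthogonal_singleton_iff_inner_right] at hq
  obtain ⟨e, hex, hen, hqe_nonneg, hq_mem⟩ := exists_inner_eq_zero_norm_eq_mem_span_pair
    (by rw [finrank_euclideanSpace_fin]; omega) hq (by norm_num : (0 : ℝ) < 1 / 2)
  refine ⟨e, hex, hen,
    closure_minimal (convexHull_min ?_ (convex_closedBall _ _)) Metric.isClosed_closedBall⟩
  refine Set.iUnion₂_subset fun f hf => convexHull_min (Set.union_subset ?_ ?_)
    (convex_closedBall _ _)
  · refine Set.singleton_subset_iff.2 (mem_closedBall_of_neg_abs_inner_le hmem hmem'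
      (hen.trans hx₀.symm).le ?_)
    rw [inner_add_right e, real_inner_smul_right, hex, mul_zero, zero_add]
    exact (neg_nonpos.2 (abs_nonneg _)).trans hqe_nonneg
  · rintro w ⟨hw, hwn⟩
    have hwx : ‖w‖ ≤ ‖x₀‖ := hwn.trans hx₀.ge
    exact mem_closedBall_of_neg_abs_inner_le hmem hmem' hwx
      (neg_le_of_abs_le (abs_inner_le_abs_inner_of_mem_span_pair c hq (hf q hq_mem) hw hwx))
end

section
/- Let d ≥ 3. There exists a constant A_d > 0, depending only on d, such that for every closed ball B̄ ⊆ ℝ^d that contains two points e₀ and −e₀ with |e₀| = 1/2, one has ∫_{B̄} |u − e₀|^{1−d} |u + e₀|^{1−d} du ≥ A_d. -/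
/-!
Any closed ball containing `a` and `b` has radius at least `‖a - b‖ / 2`, so it contains a ball of
radius `‖a - b‖ / 2` whose points lie within `‖a - b‖` of `a` and `2 ‖a - b‖` of `b`; there the
kernel `‖u - a‖ ^ s * ‖u - b‖ ^ s` (with `s = 1 - d ≤ 0`) is at least `‖a - b‖ ^ s (2 ‖a - b‖) ^ s`.
This lower bound passes to the integral over the big ball because the kernel is integrable there:
near each pole it is dominated by a multiple of `‖u - a‖ ^ s` or `‖u - b‖ ^ s`, and `s > -dim E`.
-/

open MeasureTheory Metric

lemma Real.rpow_mul_rpow_le_of_le_add {a b D s : ℝ} (ha : 0 ≤ a) (hb : 0 ≤ b) (hD : 0 < D)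
    (hab : D ≤ a + b) (hs : s ≤ 0) : a ^ s * b ^ s ≤ (D / 2) ^ s * (a ^ s + b ^ s) := by
  wlog hle : a ≤ b generalizing a b
  · simpa only [mul_comm, add_comm] using this hb ha (by linarith) (by linarith)
  have hb_far : b ^ s ≤ (D / 2) ^ s := Real.rpow_le_rpow_of_nonpos (by positivity) (by linarith) hs
  have ha_pos : 0 ≤ a ^ s := Real.rpow_nonneg ha s
  have hb_pos : 0 ≤ b ^ s := Real.rpow_nonneg hb s
  have hD_pos : 0 ≤ (D / 2) ^ s := Real.rpow_nonneg (by positivity) s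
  nlinarith

lemma exists_closedBall_subset_closedBall_dist_le {E : Type*} [NormedAddCommGroup E]
    [NormedSpace ℝ E] {x y : E} {r R : ℝ} (hx : x ∈ closedBall y R) (hr : 0 < r) (hrR : r ≤ R) :
    ∃ p, dist p x ≤ r ∧ closedBall p r ⊆ closedBall y R := by
  have hR : 0 < R := hr.trans_le hrR
  have hxy : dist x y ≤ R := mem_closedBall.1 hx
  have ht₀ : 0 ≤ r / R := by positivity
  have ht₁ : r / R ≤ 1 := (div_le_one hR).2 hrR
  refine ⟨AffineMap.lineMap x y (r / R), ?_, closedBall_subset_closedBall' ?_⟩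
  · rw [dist_lineMap_left, Real.norm_of_nonneg ht₀]
    calc r / R * dist x y ≤ r / R * R := by gcongr
      _ = r := div_mul_cancel₀ r hR.ne'
  · rw [dist_lineMap_right, Real.norm_of_nonneg (by linarith)]
    calc r + (1 - r / R) * dist x y ≤ r + (1 - r / R) * R := by gcongr
      _ = R := by field_simp; ring

section HaarMeasure

variable {E : Type*} [NormedAddCommGroup E] [NormedSpace ℝ E] [FiniteDimensional ℝ E]
  [MeasurableSpace E] [BorelSpace E] {μ : Measure E} [μ.IsAddHaarMeasure] {s : ℝ}

lemma integrableOn_ball_rpow_norm_sub [Nontrivial E] (hs : -(Module.finrank ℝ E : ℝ) < s)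
    (c : E) (ρ : ℝ) : IntegrableOn (fun u => ‖u - c‖ ^ s) (ball c ρ) μ := by
  have h_zero : IntegrableOn (fun x : E => ‖x‖ ^ s) (ball 0 ρ) μ :=
    integrableOn_ball_of_norm_le_rpow (C := 1) (α := -s) Module.finrank_pos (by linarith)
      (ae_of_all _ fun x => by simp [Real.norm_of_nonneg (Real.rpow_nonneg (norm_nonneg x) s)])
      (measurable_norm.pow_const s).aestronglyMeasurable
  have h_pre : (fun u : E => u - c) ⁻¹' ball 0 ρ = ball c ρ := by
    ext u; simp [dist_eq_norm]
  rw [← h_pre]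
  exact ((measurePreserving_sub_right μ c).integrableOn_comp_preimage
    (measurableEmbedding_subRight c)).2 h_zero

lemma integrableOn_closedBall_rpow_norm_sub_mul_rpow_norm_sub {a b : E} (hab : a ≠ b)
    (hs : -(Module.finrank ℝ E : ℝ) < s) (hs0 : s ≤ 0) (y : E) (R : ℝ) :
    IntegrableOn (fun u => ‖u - a‖ ^ s * ‖u - b‖ ^ s) (closedBall y R) μ := by
  have : Nontrivial E := nontrivial_of_ne a b hab
  have h_factor (c : E) : IntegrableOn (fun u => ‖u - c‖ ^ s) (closedBall y R) μ :=
    (integrableOn_ball_rpow_norm_sub hs c (R + dist y c + 1)).mono_set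
      (closedBall_subset_ball' (by linarith))
  refine Integrable.mono' (((h_factor a).add (h_factor b)).const_mul ((‖a - b‖ / 2) ^ s))
    (by fun_prop) (ae_of_all _ fun u => ?_)
  rw [Real.norm_of_nonneg (by positivity)]
  refine Real.rpow_mul_rpow_le_of_le_add (norm_nonneg _) (norm_nonneg _)
    (norm_pos_iff.2 (sub_ne_zero.2 hab)) ?_ hs0
  have h_tri := norm_sub_le (u - b) (u - a)
  rw [sub_sub_sub_cancel_left] at h_tri
  linarith

lemma le_setIntegral_closedBall_rpow_norm_sub_mul_rpow_norm_sub {a b y : E} {R : ℝ} (hab : a ≠ b)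
    (hs : -(Module.finrank ℝ E : ℝ) < s) (hs0 : s ≤ 0)
    (ha : a ∈ closedBall y R) (hb : b ∈ closedBall y R) :
    ‖a - b‖ ^ s * (2 * ‖a - b‖) ^ s * μ.real (closedBall 0 (‖a - b‖ / 2)) ≤
      ∫ u in closedBall y R, ‖u - a‖ ^ s * ‖u - b‖ ^ s ∂μ := by
  have : Nontrivial E := nontrivial_of_ne a b hab
  set δ := ‖a - b‖
  have hδ : 0 < δ := norm_pos_iff.2 (sub_ne_zero.2 hab)
  have hδR : δ / 2 ≤ R := by
    have := dist_triangle_right a b y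
    rw [dist_eq_norm] at this
    linarith [mem_closedBall.1 ha, mem_closedBall.1 hb]
  obtain ⟨p, hpa, hsub⟩ := exists_closedBall_subset_closedBall_dist_le ha (half_pos hδ) hδR
  have hf := integrableOn_closedBall_rpow_norm_sub_mul_rpow_norm_sub (μ := μ) hab hs hs0 y R
  -- Since `0 ^ s = 0`, the bound fails at the two (null) poles themselves.
  have h_bound : ∀ u ∈ closedBall p (δ / 2), u ≠ a → u ≠ b →
      δ ^ s * (2 * δ) ^ s ≤ ‖u - a‖ ^ s * ‖u - b‖ ^ s := by
    intro u hu hua hub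
    have hua' : ‖u - a‖ ≤ δ := by
      rw [← dist_eq_norm]
      linarith [dist_triangle u p a, mem_closedBall.1 hu]
    have hub' : ‖u - b‖ ≤ 2 * δ := by
      have := norm_sub_le_norm_sub_add_norm_sub u a b
      linarith
    exact mul_le_mul
      (Real.rpow_le_rpow_of_nonpos (norm_pos_iff.2 (sub_ne_zero.2 hua)) hua' hs0)
      (Real.rpow_le_rpow_of_nonpos (norm_pos_iff.2 (sub_ne_zero.2 hub)) hub' hs0)
      (by positivity) (by positivity)
  calc δ ^ s * (2 * δ) ^ s * μ.real (closedBall 0 (δ / 2))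
      = ∫ _ in closedBall p (δ / 2), δ ^ s * (2 * δ) ^ s ∂μ := by
        rw [setIntegral_const, smul_eq_mul, mul_comm, measureReal_def, measureReal_def,
          Measure.addHaar_closedBall_center μ p]
    _ ≤ ∫ u in closedBall p (δ / 2), ‖u - a‖ ^ s * ‖u - b‖ ^ s ∂μ := by
        refine setIntegral_mono_on_ae (integrableOn_const measure_closedBall_lt_top.ne)
          (hf.mono_set hsub) measurableSet_closedBall ?_
        filter_upwards [Measure.ae_ne μ a, Measure.ae_ne μ b] with u hua hub hu
        exact h_bound u hu hua hub
    _ ≤ ∫ u in closedBall y R, ‖u - a‖ ^ s * ‖u - b‖ ^ s ∂μ :=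
        setIntegral_mono_set hf (ae_of_all _ fun u => by positivity) hsub.eventuallyLE

end HaarMeasure

theorem stmt8_general {d : ℕ} :
    ∃ A : ℝ, 0 < A ∧
      ∀ (y₀ : EuclideanSpace ℝ (Fin d)) (R : ℝ), 0 < R →
        ∀ e₀ : EuclideanSpace ℝ (Fin d), ‖e₀‖ = 1 / 2 →
          e₀ ∈ Metric.closedBall y₀ R → -e₀ ∈ Metric.closedBall y₀ R →
          A ≤ ∫ u in Metric.closedBall y₀ R,
                ‖u - e₀‖ ^ ((1 : ℝ) - d) * ‖u + e₀‖ ^ ((1 : ℝ) - d) := by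
  have h_vol : 0 < volume.real (closedBall (0 : EuclideanSpace ℝ (Fin d)) (1 / 2)) :=
    ENNReal.toReal_pos (measure_closedBall_pos _ _ (by norm_num)).ne' measure_closedBall_lt_top.ne
  refine ⟨2 ^ ((1 : ℝ) - d) * volume.real (closedBall (0 : EuclideanSpace ℝ (Fin d)) (1 / 2)),
    by positivity, fun y₀ R _ e₀ he he_mem hne_mem => ?_⟩
  have h_dist : ‖e₀ - -e₀‖ = 1 := by
    rw [sub_neg_eq_add, ← two_smul ℝ, norm_smul, he]
    norm_num
  have hne : e₀ ≠ -e₀ := fun h => by simp [← h] at h_dist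
  have : Nontrivial (EuclideanSpace ℝ (Fin d)) := nontrivial_of_ne _ _ hne
  have hd₁ : (1 : ℝ) ≤ d := by
    have := Module.finrank_pos (R := ℝ) (M := EuclideanSpace ℝ (Fin d))
    rw [finrank_euclideanSpace_fin] at this
    exact_mod_cast this
  have key := le_setIntegral_closedBall_rpow_norm_sub_mul_rpow_norm_sub (μ := volume)
    (s := 1 - d) hne (by simp [finrank_euclideanSpace]) (by linarith) he_mem hne_mem
  rw [h_dist, Real.one_rpow, one_mul, mul_one] at key
  simpa only [sub_neg_eq_add] using key

theorem stmt8 {d : ℕ} (hd : 3 ≤ d) :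
    ∃ A : ℝ, 0 < A ∧
      ∀ (y₀ : EuclideanSpace ℝ (Fin d)) (R : ℝ), 0 < R →
        ∀ e₀ : EuclideanSpace ℝ (Fin d), ‖e₀‖ = 1 / 2 →
          e₀ ∈ Metric.closedBall y₀ R → -e₀ ∈ Metric.closedBall y₀ R →
          A ≤ ∫ u in Metric.closedBall y₀ R,
                ‖u - e₀‖ ^ ((1 : ℝ) - d) * ‖u + e₀‖ ^ ((1 : ℝ) - d) :=
  stmt8_general
end

section
/- Let (X, Σ, μ) be a measure space with μ a finite non-atomic nonnegative measure, let W : X → [0, ∞) belong to L¹(X, μ), and let t ∈ (0, μ(X)). Then inf{∫_E W dμ : E ∈ Σ, μ(E) ≥ μ(X) − t} ≤ (μ(X) − t) · W⋆(t; X; μ). -/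
/-! For `s` just above `W⋆(t)`, the set `{W < s}` has measure at least `μ(X) - t`. By
Sierpiński's theorem on non-atomic measures it contains a set `E` of measure exactly `μ(X) - t`,
and `∫_E W ≤ (μ(X) - t) s`. -/

open MeasureTheory Set
open scoped ENNReal

/-- The nonincreasing rearrangement of a nonnegative function `f` with respect to a
measure `μ`: `f⋆(t; X; μ) := sup {s > 0 : μ {x : f x ≥ s} ≥ t}`, with `sup ∅ = 0`. -/
noncomputable def rearr {X : Type*} [MeasurableSpace X] (μ : Measure X)
    (f : X → ℝ) (t : ℝ) : ℝ :=
  sSup {s : ℝ | 0 < s ∧ ENNReal.ofReal t ≤ μ {x | s ≤ f x}}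

lemma ENNReal.exists_mem_sSup_div_two_le {s : Set ℝ≥0∞} (hne : s.Nonempty) (htop : sSup s ≠ ∞) :
    ∃ x ∈ s, sSup s / 2 ≤ x := by
  rcases eq_or_ne (sSup s) 0 with h0 | h0
  · obtain ⟨x, hx⟩ := hne
    exact ⟨x, hx, by simp [h0]⟩
  · obtain ⟨x, hx, hlt⟩ := lt_sSup_iff.1 (ENNReal.half_lt_self h0 htop)
    exact ⟨x, hx, hlt.le⟩

lemma ENNReal.exists_lt_of_forall_add_le_succ {u : ℕ → ℝ≥0∞} {δ c : ℝ≥0∞} (hδ : δ ≠ 0)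
    (hc : c ≠ ∞) (hu : ∀ n, u n + δ ≤ u (n + 1)) : ∃ n, c < u n := by
  have hlinear (n : ℕ) : n * δ ≤ u n := by
    induction n with
    | zero => simp
    | succ n ih =>
      calc ((n + 1 : ℕ) : ℝ≥0∞) * δ = n * δ + δ := by push_cast; ring
        _ ≤ u n + δ := by gcongr
        _ ≤ u (n + 1) := hu n
  rcases eq_or_ne δ ∞ with rfl | hδ_top
  · exact ⟨1, hc.lt_top.trans_le (by simpa using hlinear 1)⟩
  obtain ⟨n, hn⟩ := ENNReal.exists_nat_gt (ENNReal.div_lt_top hc hδ).ne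
  rw [ENNReal.div_lt_iff (Or.inl hδ) (Or.inl hδ_top)] at hn
  exact ⟨n, hn.trans_le (hlinear n)⟩

section NonAtomic

variable {X : Type*} [MeasurableSpace X] {μ : Measure X}

def IsNonAtomic (μ : Measure X) : Prop :=
  ∀ A : Set X, MeasurableSet A → 0 < μ A → ∃ B ⊆ A, MeasurableSet B ∧ 0 < μ B ∧ μ B < μ A

namespace IsNonAtomic

lemma exists_subset_measure_pos_le_half (hμ : IsNonAtomic μ) {A : Set X} (hA : MeasurableSet A)
    (hA0 : 0 < μ A) (hA_top : μ A ≠ ∞) :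
    ∃ B ⊆ A, MeasurableSet B ∧ 0 < μ B ∧ μ B ≤ μ A / 2 := by
  obtain ⟨B, hBA, hB, hB0, hBlt⟩ := hμ A hA hA0
  rcases le_or_gt (μ B) (μ A / 2) with hle | hgt
  · exact ⟨B, hBA, hB, hB0, hle⟩
  · have hdiff : μ (A \ B) = μ A - μ B :=
      measure_sdiff hBA hB.nullMeasurableSet (ne_top_of_lt hBlt)
    refine ⟨A \ B, sdiff_subset, hA.diff hB, ?_, ?_⟩
    · rw [hdiff]
      exact tsub_pos_of_lt hBlt
    · calc μ (A \ B) = μ A - μ B := hdiff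
        _ ≤ μ A - μ A / 2 := tsub_le_tsub_left hgt.le _
        _ = μ A / 2 := ENNReal.sub_half hA_top

lemma exists_subset_measure_pos_le (hμ : IsNonAtomic μ) {A : Set X} (hA : MeasurableSet A)
    (hA0 : 0 < μ A) (hA_top : μ A ≠ ∞) {ε : ℝ≥0∞} (hε : 0 < ε) :
    ∃ B ⊆ A, MeasurableSet B ∧ 0 < μ B ∧ μ B ≤ ε := by
  have halving : ∀ n : ℕ, ∃ B ⊆ A, MeasurableSet B ∧ 0 < μ B ∧ μ B ≤ μ A * 2⁻¹ ^ n := by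
    intro n
    induction n with
    | zero => exact ⟨A, subset_rfl, hA, hA0, by simp⟩
    | succ n ih =>
      obtain ⟨B, hBA, hB, hB0, hBle⟩ := ih
      obtain ⟨C, hCB, hC, hC0, hCle⟩ :=
        hμ.exists_subset_measure_pos_le_half hB hB0 (ne_top_of_le_ne_top hA_top (measure_mono hBA))
      refine ⟨C, hCB.trans hBA, hC, hC0, ?_⟩
      calc μ C ≤ μ B / 2 := hCle
        _ ≤ μ A * 2⁻¹ ^ n / 2 := by gcongr
        _ = μ A * 2⁻¹ ^ (n + 1) := by rw [pow_succ, ← mul_assoc, div_eq_mul_inv]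
  obtain ⟨n, hn⟩ := ENNReal.exists_inv_two_pow_lt
    (ENNReal.div_ne_zero.2 ⟨hε.ne', hA_top⟩)
  obtain ⟨B, hBA, hB, hB0, hBle⟩ := halving n
  exact ⟨B, hBA, hB, hB0, hBle.trans (mul_comm (μ A) _ ▸ (ENNReal.mul_lt_of_lt_div hn).le)⟩

end IsNonAtomic

/-- One step of the greedy construction in Sierpiński's theorem. -/
lemma exists_half_greedy_extension (μ : Measure X) {A B : Set X} {c : ℝ≥0∞} (hc : c ≠ ∞)
    (hB : MeasurableSet B) (hBA : B ⊆ A) (hBc : μ B ≤ c) :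
    ∃ B', MeasurableSet B' ∧ B ⊆ B' ∧ B' ⊆ A ∧ μ B' ≤ c ∧
      ∀ C, MeasurableSet C → C ⊆ A \ B → μ B + μ C ≤ c → μ B + μ C / 2 ≤ μ B' := by
  set T := {C : Set X | MeasurableSet C ∧ C ⊆ A \ B ∧ μ B + μ C ≤ c}
  have hT : ∅ ∈ T := ⟨.empty, empty_subset _, by simpa using hBc⟩
  have hT_le : sSup (μ '' T) ≤ c := sSup_le <| by
    rintro _ ⟨C, hC, rfl⟩
    exact le_add_self.trans hC.2.2
  obtain ⟨_, ⟨C, ⟨hC, hCsub, hCc⟩, rfl⟩, hChalf⟩ := ENNReal.exists_mem_sSup_div_two_le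
    ⟨μ ∅, mem_image_of_mem μ hT⟩ (ne_top_of_le_ne_top hc hT_le)
  have hunion : μ (B ∪ C) = μ B + μ C :=
    measure_union (disjoint_left.2 fun _ hxB hxC => (hCsub hxC).2 hxB) hC
  refine ⟨B ∪ C, hB.union hC, subset_union_left,
    union_subset hBA (hCsub.trans sdiff_subset), hunion ▸ hCc, ?_⟩
  intro C' hC' hC'sub hC'c
  have hC'_le : μ C' ≤ sSup (μ '' T) := le_sSup ⟨C', ⟨hC', hC'sub, hC'c⟩, rfl⟩
  rw [hunion]
  gcongr
  exact (ENNReal.div_le_div_right hC'_le 2).trans hChalf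

/-- Sierpiński's theorem. -/
theorem IsNonAtomic.exists_subset_measure_eq (hμ : IsNonAtomic μ) {A : Set X}
    (hA : MeasurableSet A) (hA_top : μ A ≠ ∞) {c : ℝ≥0∞} (hc : c ≤ μ A) :
    ∃ B ⊆ A, MeasurableSet B ∧ μ B = c := by
  have hc_top : c ≠ ∞ := ne_top_of_le_ne_top hA_top hc
  choose! next hnext_meas hsub_next hnext_sub hnext_le hnext_gain using
    fun B (hB : MeasurableSet B) (hBA : B ⊆ A) (hBc : μ B ≤ c) =>
      exists_half_greedy_extension μ hc_top hB hBA hBc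
  set g : ℕ → Set X := fun n => next^[n] ∅
  have hg_succ (n : ℕ) : g (n + 1) = next (g n) := Function.iterate_succ_apply' next n ∅
  have hg (n : ℕ) : MeasurableSet (g n) ∧ g n ⊆ A ∧ μ (g n) ≤ c := by
    induction n with
    | zero => simp [g]
    | succ n ih =>
      rw [hg_succ]
      exact ⟨hnext_meas _ ih.1 ih.2.1 ih.2.2, hnext_sub _ ih.1 ih.2.1 ih.2.2,
        hnext_le _ ih.1 ih.2.1 ih.2.2⟩
  have hg_mono : Monotone g := monotone_nat_of_le_succ fun n =>
    (hg_succ n).symm ▸ hsub_next _ (hg n).1 (hg n).2.1 (hg n).2.2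
  have hU : MeasurableSet (⋃ n, g n) := .iUnion fun n => (hg n).1
  have hUA : (⋃ n, g n) ⊆ A := iUnion_subset fun n => (hg n).2.1
  have hUc : μ (⋃ n, g n) ≤ c := by
    rw [hg_mono.directed_le.measure_iUnion]
    exact iSup_le fun n => (hg n).2.2
  refine ⟨⋃ n, g n, hUA, hU, le_antisymm hUc (not_lt.1 fun hlt => ?_)⟩
  -- a leftover piece of positive measure would have been admissible at every step
  have hrest : 0 < μ (A \ ⋃ n, g n) := by
    rw [measure_sdiff hUA hU.nullMeasurableSet (ne_top_of_le_ne_top hc_top hUc)]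
    exact tsub_pos_of_lt (hlt.trans_le hc)
  obtain ⟨C, hCsub, hC, hC0, hCle⟩ := hμ.exists_subset_measure_pos_le (hA.diff hU) hrest
    (ne_top_of_le_ne_top hA_top (measure_mono sdiff_subset)) (tsub_pos_of_lt hlt)
  have hgain (n : ℕ) : μ (g n) + μ C / 2 ≤ μ (g (n + 1)) := by
    rw [hg_succ]
    refine hnext_gain _ (hg n).1 (hg n).2.1 (hg n).2.2 C hC
      (hCsub.trans (sdiff_subset_sdiff_right (subset_iUnion g n))) ?_
    calc μ (g n) + μ C ≤ μ (⋃ n, g n) + (c - μ (⋃ n, g n)) :=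
          add_le_add (measure_mono (subset_iUnion g n)) hCle
      _ = c := add_tsub_cancel_of_le hUc
  obtain ⟨n, hn⟩ := ENNReal.exists_lt_of_forall_add_le_succ (ENNReal.half_pos hC0.ne').ne'
    hc_top hgain
  exact (hg n).2.2.not_gt hn

end NonAtomic

section Rearrangement

variable {X : Type*} [MeasurableSpace X] {μ : Measure X} {W : X → ℝ} {t s : ℝ}

lemma rearr_nonneg (μ : Measure X) (f : X → ℝ) (t : ℝ) : 0 ≤ rearr μ f t :=
  Real.sSup_nonneg fun _ hs => hs.1.le

lemma bddAbove_rearr_set [IsFiniteMeasure μ] (hW0 : 0 ≤ᵐ[μ] W) (hWint : Integrable W μ)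
    (ht : 0 < t) : BddAbove {s : ℝ | 0 < s ∧ ENNReal.ofReal t ≤ μ {x | s ≤ W x}} := by
  refine ⟨(∫ x, W x ∂μ) / t, fun s ⟨hs0, hst⟩ => ?_⟩
  have ht_le : t ≤ μ.real {x | s ≤ W x} :=
    (ENNReal.ofReal_le_iff_le_toReal (measure_ne_top μ _)).1 hst
  rw [le_div_iff₀ ht]
  calc s * t ≤ s * μ.real {x | s ≤ W x} := by gcongr
    _ ≤ ∫ x, W x ∂μ := mul_meas_ge_le_integral_of_nonneg hW0 hWint s

lemma measure_le_lt_of_rearr_lt [IsFiniteMeasure μ] (hW0 : 0 ≤ᵐ[μ] W)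
    (hWint : Integrable W μ) (ht : 0 < t) (hs : rearr μ W t < s) :
    μ {x | s ≤ W x} < ENNReal.ofReal t := by
  by_contra! hst
  have hs0 : 0 < s := (rearr_nonneg μ W t).trans_lt hs
  exact hs.not_ge (le_csSup (bddAbove_rearr_set hW0 hWint ht) ⟨hs0, hst⟩)

lemma ofReal_sub_le_measure_lt_of_rearr_lt [IsFiniteMeasure μ] (hWmeas : Measurable W)
    (hW0 : 0 ≤ᵐ[μ] W) (hWint : Integrable W μ) (ht : 0 < t) (hs : rearr μ W t < s) :
    ENNReal.ofReal ((μ univ).toReal - t) ≤ μ {x | W x < s} := by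
  have hcompl : {x | W x < s} = {x | s ≤ W x}ᶜ := by
    ext x
    simp
  rw [hcompl, measure_compl (measurableSet_le measurable_const hWmeas) (measure_ne_top μ _),
    ENNReal.ofReal_sub _ ht.le, ENNReal.ofReal_toReal (measure_ne_top μ _)]
  exact tsub_le_tsub_left (measure_le_lt_of_rearr_lt hW0 hWint ht hs).le _

end Rearrangement

theorem stmt13 {X : Type*} [MeasurableSpace X] (μ : Measure X) [IsFiniteMeasure μ]
    (hna : ∀ A : Set X, MeasurableSet A → 0 < μ A →
      ∃ B ⊆ A, MeasurableSet B ∧ 0 < μ B ∧ μ B < μ A)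
    (W : X → ℝ) (hWmeas : Measurable W) (hW0 : ∀ x, 0 ≤ W x)
    (hWint : Integrable W μ) (t : ℝ)
    (ht0 : 0 < t) (htX : t < (μ Set.univ).toReal) :
    sInf ((fun E => ∫ x in E, W x ∂μ) ''
        {E : Set X | MeasurableSet E ∧ (μ Set.univ).toReal - t ≤ (μ E).toReal}) ≤
      ((μ Set.univ).toReal - t) * rearr μ W t := by
  set a := (μ Set.univ).toReal - t
  have ha : 0 < a := sub_pos.2 htX
  have hbdd : BddBelow ((fun E => ∫ x in E, W x ∂μ) ''
      {E : Set X | MeasurableSet E ∧ a ≤ (μ E).toReal}) :=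
    ⟨0, by rintro _ ⟨E, hE, rfl⟩; exact setIntegral_nonneg hE.1 fun x _ => hW0 x⟩
  refine le_of_forall_pos_le_add fun ε hε => ?_
  set s := rearr μ W t + ε / a
  have hlevel : ENNReal.ofReal a ≤ μ {x | W x < s} :=
    ofReal_sub_le_measure_lt_of_rearr_lt hWmeas (.of_forall hW0) hWint ht0
      (lt_add_of_pos_right _ (div_pos hε ha))
  obtain ⟨E, hEsub, hE, hEμ⟩ :=
    IsNonAtomic.exists_subset_measure_eq hna (measurableSet_lt hWmeas measurable_const)
      (measure_ne_top μ _) hlevel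
  have hEa : μ.real E = a := by rw [measureReal_def, hEμ, ENNReal.toReal_ofReal ha.le]
  calc _ ≤ ∫ x in E, W x ∂μ := csInf_le hbdd ⟨E, ⟨hE, by rw [← measureReal_def, hEa]⟩, rfl⟩
    _ ≤ ∫ _ in E, s ∂μ := setIntegral_mono_on hWint.integrableOn
        (integrableOn_const (measure_ne_top μ E)) hE fun x hx => (hEsub hx).le
    _ = a * rearr μ W t + ε := by
        rw [setIntegral_const, hEa, smul_eq_mul, mul_add, mul_div_cancel₀ _ ha.ne']
end
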